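/- In the hard-sphere case, 2Γ(1/2) − Γ(0) − Γ(1) = 2/(3π), and for every integer k ≥ 2 one has 2Γ(k/2) − Γ(0) − Γ(k) = −4(2k⁴ − 4 sin(kπ/2)k³ + k² + sin(kπ/2)k)/((k²−1)(4k²−1)π); moreover for k ≥ 2 the numerator satisfies 2k⁴ − 4 sin(kπ/2)k³ + k² + sin(kπ/2)k ≥ 2k⁴ − 4k³ + k² − k ≥ k² − k > 0, so 2Γ(k/2) − Γ(0) − Γ(k) < 0. -/

import Mathlib

/-!
At an integer `k` the sine in `Γ(k)` vanishes, and at `k/2` it becomes `s = sin(kπ/2) ∈ [-1, 1]`.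
So `2Γ(k/2) - Γ(0) - Γ(k)` is a rational function of `k` and `s` whose denominator is positive for
`k ≥ 2`, and since `|s| ≤ 1` its numerator is at least `2k³(k - 2) + k² - k > 0`.
-/

open Real

/-- Hard-sphere kernel transform: `Γ(u) = (2 - 4u sin(πu))/(π - 4πu²)` for `u ≠ ±1/2`,
`Γ(±1/2) = 1/π`. -/
noncomputable def GamH (u : ℝ) : ℝ :=
  if u = 1 / 2 ∨ u = -(1 / 2) then 1 / π
  else (2 - 4 * u * Real.sin (π * u)) / (π - 4 * π * u ^ 2)

lemma GamH_of_ne {u : ℝ} (h₁ : u ≠ 1 / 2) (h₂ : u ≠ -(1 / 2)) :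
    GamH u = (2 - 4 * u * Real.sin (π * u)) / (π - 4 * π * u ^ 2) :=
  if_neg (not_or.mpr ⟨h₁, h₂⟩)

lemma GamH_half : GamH (1 / 2) = 1 / π :=
  if_pos (Or.inl rfl)

lemma GamH_zero : GamH 0 = 2 / π := by
  rw [GamH_of_ne (by norm_num) (by norm_num)]
  norm_num

lemma GamH_intCast (k : ℤ) : GamH k = 2 / (π * (1 - 4 * (k : ℝ) ^ 2)) := by
  have h₁ : (k : ℝ) ≠ 1 / 2 := fun h => by
    have : (2 * k : ℝ) = 1 := by rw [h]; norm_num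
    exact absurd (by exact_mod_cast this : 2 * k = 1) (by omega)
  have h₂ : (k : ℝ) ≠ -(1 / 2) := fun h => by
    have : (2 * k : ℝ) = -1 := by rw [h]; norm_num
    exact absurd (by exact_mod_cast this : 2 * k = -1) (by omega)
  rw [GamH_of_ne h₁ h₂, mul_comm π, Real.sin_int_mul_pi]
  ring_nf

lemma GamH_one : GamH 1 = -(2 / (3 * π)) := by
  have h := GamH_intCast 1
  push_cast at h
  rw [h]
  ring

lemma GamH_div_two {x : ℝ} (h₁ : x ≠ 1) (h₂ : x ≠ -1) :
    GamH (x / 2) = (2 - 2 * x * Real.sin (x * π / 2)) / (π * (1 - x ^ 2)) := by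
  rw [GamH_of_ne (fun h => h₁ (by linarith)) (fun h => h₂ (by linarith))]
  ring_nf

lemma two_mul_GamH_div_two_sub_GamH_zero_sub_GamH_intCast {k : ℤ} (hk : k ^ 2 ≠ 1) :
    2 * GamH ((k : ℝ) / 2) - GamH 0 - GamH (k : ℝ) =
      -(4 * (2 * (k : ℝ) ^ 4 - 4 * Real.sin ((k : ℝ) * π / 2) * (k : ℝ) ^ 3 + (k : ℝ) ^ 2
          + Real.sin ((k : ℝ) * π / 2) * (k : ℝ)) /
        (((k : ℝ) ^ 2 - 1) * (4 * (k : ℝ) ^ 2 - 1) * π)) := by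
  have h₁ : (k : ℝ) ^ 2 - 1 ≠ 0 := sub_ne_zero.mpr (by exact_mod_cast hk)
  -- stated as `k ^ 2 * 4`, the normal form `field_simp` looks for
  have h₂ : (k : ℝ) ^ 2 * 4 - 1 ≠ 0 := sub_ne_zero.mpr (by norm_cast; omega)
  rw [GamH_div_two (fun h => h₁ (by rw [h]; norm_num)) (fun h => h₁ (by rw [h]; norm_num)),
    GamH_zero, GamH_intCast, ← neg_sub ((k : ℝ) ^ 2), ← neg_sub (4 * (k : ℝ) ^ 2), mul_comm 4]
  field_simp
  ring

lemma numerator_ge_of_abs_le_one {x s : ℝ} (hx : 0 ≤ x) (hs : |s| ≤ 1) :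
    2 * x ^ 4 - 4 * s * x ^ 3 + x ^ 2 + s * x ≥ 2 * x ^ 4 - 4 * x ^ 3 + x ^ 2 - x := by
  obtain ⟨hs₁, hs₂⟩ := abs_le.mp hs
  nlinarith [mul_nonneg (sub_nonneg.mpr hs₂) (pow_nonneg hx 3),
    mul_nonneg (neg_le_iff_add_nonneg.mp hs₁) hx]

lemma sq_sub_self_le_of_two_le {x : ℝ} (hx : 2 ≤ x) :
    2 * x ^ 4 - 4 * x ^ 3 + x ^ 2 - x ≥ x ^ 2 - x := by
  nlinarith [mul_nonneg (sub_nonneg.mpr hx) (pow_nonneg (by linarith : (0 : ℝ) ≤ x) 3)]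

theorem stmt_10 :
    2 * GamH (1 / 2) - GamH 0 - GamH 1 = 2 / (3 * π) ∧
    ∀ k : ℤ, 2 ≤ k →
      (2 * GamH ((k : ℝ) / 2) - GamH 0 - GamH (k : ℝ) =
        -(4 * (2 * (k : ℝ) ^ 4 - 4 * Real.sin ((k : ℝ) * π / 2) * (k : ℝ) ^ 3 + (k : ℝ) ^ 2
            + Real.sin ((k : ℝ) * π / 2) * (k : ℝ)) /
          (((k : ℝ) ^ 2 - 1) * (4 * (k : ℝ) ^ 2 - 1) * π))) ∧
      (2 * (k : ℝ) ^ 4 - 4 * Real.sin ((k : ℝ) * π / 2) * (k : ℝ) ^ 3 + (k : ℝ) ^ 2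
          + Real.sin ((k : ℝ) * π / 2) * (k : ℝ) ≥
        2 * (k : ℝ) ^ 4 - 4 * (k : ℝ) ^ 3 + (k : ℝ) ^ 2 - (k : ℝ)) ∧
      (2 * (k : ℝ) ^ 4 - 4 * (k : ℝ) ^ 3 + (k : ℝ) ^ 2 - (k : ℝ) ≥ (k : ℝ) ^ 2 - (k : ℝ)) ∧
      ((0 : ℝ) < (k : ℝ) ^ 2 - (k : ℝ)) ∧
      (2 * GamH ((k : ℝ) / 2) - GamH 0 - GamH (k : ℝ) < 0) := by
  refine ⟨?_, fun k hk => ?_⟩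
  · rw [GamH_half, GamH_zero, GamH_one]
    field_simp
    ring
  have hx : (2 : ℝ) ≤ k := by exact_mod_cast hk
  have heq := two_mul_GamH_div_two_sub_GamH_zero_sub_GamH_intCast (k := k) (by nlinarith)
  have hnum := numerator_ge_of_abs_le_one (x := k) (by linarith) (abs_sin_le_one ((k : ℝ) * π / 2))
  have hmid := sq_sub_self_le_of_two_le hx
  have hpos : (0 : ℝ) < (k : ℝ) ^ 2 - k := by nlinarith
  refine ⟨heq, hnum, hmid, hpos, ?_⟩
  rw [heq, neg_lt_zero]
  have hden : 0 < ((k : ℝ) ^ 2 - 1) * (4 * (k : ℝ) ^ 2 - 1) * π :=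
    mul_pos (mul_pos (by nlinarith) (by nlinarith)) pi_pos
  exact div_pos (by linarith) hden
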